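/- Let G', G'', G''' be graphs on mutually disjoint vertex sets, G = G' *̃ G'' *̃ G''' their reduced join, L' = G' *̃ G''' and L'' = G'' *̃ G'''. Then the directed independence complexes satisfy Ind→(G''') = Ind→(L') ∩ Ind→(L'') and Ind→(G) = Ind→(L') ∪ Ind→(L''). -/
import Mathlib


/-- The directed independence complex of a graph `G` relative to a vertex set `A`:
finite nonempty ordered tuples of distinct, pairwise non-adjacent vertices of `A`. -/
def dirInd {α : Type*} (G : SimpleGraph α) (A : Set α) : Set (List α) :=
  {l | l ≠ [] ∧ l.Nodup ∧ (∀ v ∈ l, v ∈ A) ∧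
    ∀ u ∈ l, ∀ v ∈ l, u ≠ v → ¬ G.Adj u v}

/-- The reduced join of graphs `G` (with vertex set `A`) and `H` (with vertex set `B`),
for disjoint `A` and `B`: the disjoint union of `G` and `H` together with all edges
between `A` and `B`. -/
def redJoin {α : Type*} (G H : SimpleGraph α) (A B : Set α) : SimpleGraph α :=
  SimpleGraph.fromRel (fun u v => G.Adj u v ∨ H.Adj u v ∨ (u ∈ A ∧ v ∈ B))

/-- Let `G'`, `G''`, `G'''` be graphs on mutually disjoint vertex sets `A`, `B`, `C`,
`G = G' *̃ G'' *̃ G'''` their reduced join, `L' = G' *̃ G'''` and `L'' = G'' *̃ G'''`.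
Then `Ind→(G''') = Ind→(L') ∩ Ind→(L'')` and `Ind→(G) = Ind→(L') ∪ Ind→(L'')`. -/
theorem dirInd_redJoin_inter_union {α : Type*}
    (A B C : Set α) (hAB : Disjoint A B) (hAC : Disjoint A C) (hBC : Disjoint B C)
    (G' G'' G''' : SimpleGraph α)
    (hA : ∀ u v, G'.Adj u v → u ∈ A ∧ v ∈ A)
    (hB : ∀ u v, G''.Adj u v → u ∈ B ∧ v ∈ B)
    (hC : ∀ u v, G'''.Adj u v → u ∈ C ∧ v ∈ C) :
    dirInd G''' C =
      dirInd (redJoin G' G''' A C) (A ∪ C) ∩ dirInd (redJoin G'' G''' B C) (B ∪ C) ∧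
    dirInd (redJoin (redJoin G' G'' A B) G''' (A ∪ B) C) (A ∪ B ∪ C) =
      dirInd (redJoin G' G''' A C) (A ∪ C) ∪ dirInd (redJoin G'' G''' B C) (B ∪ C) := by
  have nAB : ∀ x, x ∈ A → x ∉ B := fun x hx => Set.disjoint_left.mp hAB hx
  have nAC : ∀ x, x ∈ A → x ∉ C := fun x hx => Set.disjoint_left.mp hAC hx
  have nBC : ∀ x, x ∈ B → x ∉ C := fun x hx => Set.disjoint_left.mp hBC hx
  -- On C, L' agrees with G'''
  have h1 : ∀ u v, u ∈ C → v ∈ C →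
      ((redJoin G' G''' A C).Adj u v ↔ G'''.Adj u v) := by
    intro u v hu hv
    have := hA u v; have := hA v u; have := nAC u; have := nAC v
    have hsym : G'''.Adj v u → G'''.Adj u v := fun h => h.symm
    have hne : G'''.Adj u v → u ≠ v := fun h => h.ne
    simp only [redJoin, SimpleGraph.fromRel_adj]
    tauto
  -- On C, L'' agrees with G'''
  have h2 : ∀ u v, u ∈ C → v ∈ C →
      ((redJoin G'' G''' B C).Adj u v ↔ G'''.Adj u v) := by
    intro u v hu hv
    have := hB u v; have := hB v u; have := nBC u; have := nBC v
    have hsym : G'''.Adj v u → G'''.Adj u v := fun h => h.symm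
    have hne : G'''.Adj u v → u ≠ v := fun h => h.ne
    simp only [redJoin, SimpleGraph.fromRel_adj]
    tauto
  -- L' is a subgraph of G
  have h3 : ∀ u v, (redJoin G' G''' A C).Adj u v →
      (redJoin (redJoin G' G'' A B) G''' (A ∪ B) C).Adj u v := by
    intro u v
    simp only [redJoin, SimpleGraph.fromRel_adj, Set.mem_union]
    tauto
  -- L'' is a subgraph of G
  have h4 : ∀ u v, (redJoin G'' G''' B C).Adj u v →
      (redJoin (redJoin G' G'' A B) G''' (A ∪ B) C).Adj u v := by
    intro u v
    simp only [redJoin, SimpleGraph.fromRel_adj, Set.mem_union]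
    tauto
  -- On A ∪ C, G agrees with L'
  have h5 : ∀ u v, u ∈ A ∪ C → v ∈ A ∪ C →
      (redJoin (redJoin G' G'' A B) G''' (A ∪ B) C).Adj u v →
      (redJoin G' G''' A C).Adj u v := by
    intro u v hu hv hadj
    simp only [redJoin, SimpleGraph.fromRel_adj, Set.mem_union] at hadj ⊢
    obtain ⟨hne, hR⟩ := hadj
    refine ⟨hne, ?_⟩
    have key : ∀ x y, x ∈ A ∪ C → y ∈ A ∪ C →
        ((x ≠ y ∧ ((G'.Adj x y ∨ G''.Adj x y ∨ x ∈ A ∧ y ∈ B) ∨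
            (G'.Adj y x ∨ G''.Adj y x ∨ y ∈ A ∧ x ∈ B))) ∨ G'''.Adj x y ∨
            ((x ∈ A ∨ x ∈ B) ∧ y ∈ C)) →
        (G'.Adj x y ∨ G'''.Adj x y ∨ x ∈ A ∧ y ∈ C) ∨
          (G'.Adj y x ∨ G'''.Adj y x ∨ y ∈ A ∧ x ∈ C) := by
      intro x y hx hy hr
      have hxB : x ∉ B := by
        rcases hx with h | h
        · exact nAB x h
        · exact fun hb => nBC x hb h
      have hyB : y ∉ B := by
        rcases hy with h | h
        · exact nAB y h
        · exact fun hb => nBC y hb h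
      rcases hr with ⟨_, (h | h | ⟨_, h⟩) | (h | h | ⟨_, h⟩)⟩ | h | ⟨h | h, hc⟩
      · exact Or.inl (Or.inl h)
      · exact absurd (hB x y h).1 hxB
      · exact absurd h hyB
      · exact Or.inr (Or.inl h)
      · exact absurd (hB y x h).1 hyB
      · exact absurd h hxB
      · exact Or.inl (Or.inr (Or.inl h))
      · exact Or.inl (Or.inr (Or.inr ⟨h, hc⟩))
      · exact absurd h hxB
    rcases hR with h | h
    · exact key u v hu hv h
    · exact (key v u hv hu h).symm
  -- On B ∪ C, G agrees with L''
  have h6 : ∀ u v, u ∈ B ∪ C → v ∈ B ∪ C →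
      (redJoin (redJoin G' G'' A B) G''' (A ∪ B) C).Adj u v →
      (redJoin G'' G''' B C).Adj u v := by
    intro u v hu hv hadj
    simp only [redJoin, SimpleGraph.fromRel_adj, Set.mem_union] at hadj ⊢
    obtain ⟨hne, hR⟩ := hadj
    refine ⟨hne, ?_⟩
    have key : ∀ x y, x ∈ B ∪ C → y ∈ B ∪ C →
        ((x ≠ y ∧ ((G'.Adj x y ∨ G''.Adj x y ∨ x ∈ A ∧ y ∈ B) ∨
            (G'.Adj y x ∨ G''.Adj y x ∨ y ∈ A ∧ x ∈ B))) ∨ G'''.Adj x y ∨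
            ((x ∈ A ∨ x ∈ B) ∧ y ∈ C)) →
        (G''.Adj x y ∨ G'''.Adj x y ∨ x ∈ B ∧ y ∈ C) ∨
          (G''.Adj y x ∨ G'''.Adj y x ∨ y ∈ B ∧ x ∈ C) := by
      intro x y hx hy hr
      have hxA : x ∉ A := by
        rcases hx with h | h
        · exact fun ha => nAB x ha h
        · exact fun ha => nAC x ha h
      have hyA : y ∉ A := by
        rcases hy with h | h
        · exact fun ha => nAB y ha h
        · exact fun ha => nAC y ha h
      rcases hr with ⟨_, (h | h | ⟨h, _⟩) | (h | h | ⟨h, _⟩)⟩ | h | ⟨h | h, hc⟩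
      · exact absurd (hA x y h).1 hxA
      · exact Or.inl (Or.inl h)
      · exact absurd h hxA
      · exact absurd (hA y x h).1 hyA
      · exact Or.inr (Or.inl h)
      · exact absurd h hyA
      · exact Or.inl (Or.inr (Or.inl h))
      · exact absurd h hxA
      · exact Or.inl (Or.inr (Or.inr ⟨h, hc⟩))
    rcases hR with h | h
    · exact key u v hu hv h
    · exact (key v u hv hu h).symm
  -- All A-B pairs are adjacent in G
  have h7 : ∀ u v, u ∈ A → v ∈ B → u ≠ v →
      (redJoin (redJoin G' G'' A B) G''' (A ∪ B) C).Adj u v := by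
    intro u v hu hv hne
    simp only [redJoin, SimpleGraph.fromRel_adj, Set.mem_union]
    exact ⟨hne, Or.inl (Or.inl ⟨hne, Or.inl (Or.inr (Or.inr ⟨hu, hv⟩))⟩)⟩
  constructor
  · ext l
    simp only [dirInd, Set.mem_inter_iff, Set.mem_setOf_eq]
    constructor
    · rintro ⟨hne, hnd, hmem, hind⟩
      refine ⟨⟨hne, hnd, fun v hv => Or.inr (hmem v hv), ?_⟩,
              ⟨hne, hnd, fun v hv => Or.inr (hmem v hv), ?_⟩⟩
      · intro u hu v hv huv hadj
        exact hind u hu v hv huv ((h1 u v (hmem u hu) (hmem v hv)).mp hadj)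
      · intro u hu v hv huv hadj
        exact hind u hu v hv huv ((h2 u v (hmem u hu) (hmem v hv)).mp hadj)
    · rintro ⟨⟨hne, hnd, hmem1, hind1⟩, ⟨_, _, hmem2, _⟩⟩
      have hmem : ∀ v ∈ l, v ∈ C := by
        intro v hv
        rcases hmem1 v hv with h | h
        · rcases hmem2 v hv with h' | h'
          · exact absurd h' (nAB v h)
          · exact h'
        · exact h
      exact ⟨hne, hnd, hmem, fun u hu v hv huv hadj =>
        hind1 u hu v hv huv ((h1 u v (hmem u hu) (hmem v hv)).mpr hadj)⟩
  · ext l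
    simp only [dirInd, Set.mem_union, Set.mem_setOf_eq]
    constructor
    · rintro ⟨hne, hnd, hmem, hind⟩
      by_cases hcase : ∀ v ∈ l, v ∉ B
      · left
        refine ⟨hne, hnd, ?_, fun u hu v hv huv hadj =>
          hind u hu v hv huv (h3 u v hadj)⟩
        intro v hv
        rcases hmem v hv with (h | h) | h
        · exact Or.inl h
        · exact absurd h (hcase v hv)
        · exact Or.inr h
      · right
        push_neg at hcase
        obtain ⟨b, hbl, hbB⟩ := hcase
        have hnA : ∀ v ∈ l, v ∉ A := by
          intro v hv hvA
          have hvb : v ≠ b := fun e => nAB v hvA (e ▸ hbB)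
          exact hind v hv b hbl hvb (h7 v b hvA hbB hvb)
        refine ⟨hne, hnd, ?_, fun u hu v hv huv hadj =>
          hind u hu v hv huv (h4 u v hadj)⟩
        intro v hv
        rcases hmem v hv with (h | h) | h
        · exact absurd h (hnA v hv)
        · exact Or.inl h
        · exact Or.inr h
    · rintro (⟨hne, hnd, hmem, hind⟩ | ⟨hne, hnd, hmem, hind⟩)
      · refine ⟨hne, hnd, fun v hv => ?_, fun u hu v hv huv hadj =>
          hind u hu v hv huv (h5 u v (hmem u hu) (hmem v hv) hadj)⟩
        rcases hmem v hv with h | h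
        · exact Or.inl (Or.inl h)
        · exact Or.inr h
      · refine ⟨hne, hnd, fun v hv => ?_, fun u hu v hv huv hadj =>
          hind u hu v hv huv (h6 u v (hmem u hu) (hmem v hv) hadj)⟩
        rcases hmem v hv with h | h
        · exact Or.inl (Or.inr h)
        · exact Or.inr h
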